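/- Let A be a densely defined, closed symmetric operator in a separable Hilbert space H with boundary triplet {ℂ, Γ₀, Γ₁} for A*. Let σ be a positive Borel measure on ℝ with ∫ dσ(t)/(1+t²) < ∞ and h ∈ ℝ (the case h₀ = 0). Define the operator à in H̃ = H ⊕ L²(ℝ, dσ) by Ã(x₀, x₁) = (A*x₀, t·x₁(t) − Γ₀x₀) on the domain of pairs (x₀, x₁) with x₀ ∈ D(A*), t·x₁(t) − Γ₀x₀ ∈ L²(ℝ, dσ), and Γ₁x₀ + h·Γ₀x₀ + ∫ (x₁(t) − (t/(1+t²))·Γ₀x₀) dσ(t) = 0. Then à is symmetric: ⟨Ãx̃, ỹ⟩ = ⟨x̃, Ãỹ⟩ for all x̃, ỹ ∈ D(Ã). -/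

import Mathlib

open MeasureTheory
open scoped InnerProductSpace ComplexConjugate

/-!
The boundary form of `Ã` is that of `A*` plus that of the multiplication part. Green's identity
gives the first as `conj (Γ₁x₀) Γ₀y₀ − conj (Γ₀x₀) Γ₁y₀`. For the second, pointwise
`conj (t x₁ − a) y₁ − conj x₁ (t y₁ − c) = c conj x₁ − conj a y₁`, and subtracting the real
function `t / (1 + t²)` times `a` and `c` (which cancels) makes both terms integrable; the domain
conditions turn the resulting integrals into `−Γ₁ − hΓ₀`, so, `h` being real, the two boundary
forms cancel.
-/

section SquareIntegrable

variable {α : Type*} [MeasurableSpace α] {μ : Measure α}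

lemma MeasureTheory.Integrable.conj {f : α → ℂ} (hf : Integrable f μ) :
    Integrable (fun t => conj (f t)) μ :=
  memLp_one_iff_integrable.1 (memLp_one_iff_integrable.2 hf).star

lemma MeasureTheory.MemLp.integrable_conj_mul {f g : α → ℂ} (hf : MemLp f 2 μ)
    (hg : MemLp g 2 μ) :
    Integrable (fun t => conj (f t) * g t) μ :=
  hf.star.integrable_mul hg

lemma memLp_two_of_sq_norm_le {f : α → ℂ} {g : α → ℝ} (hf : AEStronglyMeasurable f μ)
    (hg : Integrable g μ) (hfg : ∀ t, ‖f t‖ ^ 2 ≤ g t) : MemLp f 2 μ := by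
  rw [memLp_two_iff_integrable_sq_norm hf]
  refine hg.mono' (hf.norm.pow 2) (Filter.Eventually.of_forall fun t => ?_)
  rw [Real.norm_of_nonneg (by positivity)]
  exact hfg t

end SquareIntegrable

lemma conj_mul_sub_conj_mul_eq (t r : ℝ) (x y a c : ℂ) :
    conj ((t : ℂ) * x - a) * y - conj x * ((t : ℂ) * y - c) =
      c * conj (x - r * a) - conj a * (y - r * c) := by
  simp only [_root_.map_sub, _root_.map_mul, Complex.conj_ofReal]
  ring

section Nevanlinna

variable {σ : Measure ℝ}

lemma one_add_ofReal_sq_ne_zero (t : ℝ) : 1 + (t : ℂ) ^ 2 ≠ 0 := by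
  exact_mod_cast (by positivity : (1 + t ^ 2 : ℝ) ≠ 0)

lemma memLp_two_inv_one_add_sq (hσ : Integrable (fun t : ℝ => (1 + t ^ 2)⁻¹) σ) :
    MemLp (fun t : ℝ => (1 + (t : ℂ) ^ 2)⁻¹) 2 σ := by
  refine memLp_two_of_sq_norm_le
    (Continuous.inv₀ (by fun_prop) one_add_ofReal_sq_ne_zero).aestronglyMeasurable hσ
    fun t => ?_
  rw [show (1 + (t : ℂ) ^ 2)⁻¹ = (((1 + t ^ 2)⁻¹ : ℝ) : ℂ) by push_cast; ring, Complex.norm_real,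
    Real.norm_of_nonneg (by positivity), sq]
  exact mul_le_of_le_one_left (by positivity) (inv_le_one_of_one_le₀ (by nlinarith))

lemma memLp_two_div_one_add_sq (hσ : Integrable (fun t : ℝ => (1 + t ^ 2)⁻¹) σ) :
    MemLp (fun t : ℝ => (t : ℂ) / (1 + (t : ℂ) ^ 2)) 2 σ := by
  refine memLp_two_of_sq_norm_le
    (Continuous.div (by fun_prop) (by fun_prop) one_add_ofReal_sq_ne_zero).aestronglyMeasurable
    hσ fun t => ?_
  have hpos : (0 : ℝ) < 1 + t ^ 2 := by positivity
  rw [show (t : ℂ) / (1 + (t : ℂ) ^ 2) = ((t / (1 + t ^ 2) : ℝ) : ℂ) by push_cast; ring,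
    Complex.norm_real, Real.norm_eq_abs, sq_abs, div_pow, div_le_iff₀ (by positivity),
    sq (1 + t ^ 2), ← mul_assoc, inv_mul_cancel₀ hpos.ne', one_mul]
  linarith

/-- Because `x = (1 + t²)⁻¹ x + t / (1 + t²) · t x`, subtracting `t / (1 + t²) · a` leaves a sum of
two products of square-integrable functions. -/
lemma integrable_sub_div_one_add_sq_mul (hσ : Integrable (fun t : ℝ => (1 + t ^ 2)⁻¹) σ)
    {x : ℝ → ℂ} {a : ℂ} (hx : MemLp x 2 σ) (hxa : MemLp (fun t : ℝ => (t : ℂ) * x t - a) 2 σ) :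
    Integrable (fun t : ℝ => x t - (t : ℂ) / (1 + (t : ℂ) ^ 2) * a) σ := by
  refine (((memLp_two_inv_one_add_sq hσ).integrable_mul hx).add
    ((memLp_two_div_one_add_sq hσ).integrable_mul hxa)).congr
    (Filter.Eventually.of_forall fun t => ?_)
  simp only [Pi.add_apply, Pi.mul_apply]
  field_simp [one_add_ofReal_sq_ne_zero t]
  ring

lemma integral_conj_mul_sub_integral_conj_mul
    (hσ : Integrable (fun t : ℝ => (1 + t ^ 2)⁻¹) σ) {x y : ℝ → ℂ} {a c : ℂ}
    (hx : MemLp x 2 σ) (hy : MemLp y 2 σ)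
    (hxa : MemLp (fun t : ℝ => (t : ℂ) * x t - a) 2 σ)
    (hyc : MemLp (fun t : ℝ => (t : ℂ) * y t - c) 2 σ) :
    ∫ t, conj ((t : ℂ) * x t - a) * y t ∂σ - ∫ t, conj (x t) * ((t : ℂ) * y t - c) ∂σ =
      c * conj (∫ t, (x t - (t : ℂ) / (1 + (t : ℂ) ^ 2) * a) ∂σ) -
        conj a * ∫ t, (y t - (t : ℂ) / (1 + (t : ℂ) ^ 2) * c) ∂σ := by
  rw [← integral_sub (hxa.integrable_conj_mul hy) (hx.integrable_conj_mul hyc), ← integral_conj,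
    ← integral_const_mul, ← integral_const_mul,
    ← integral_sub (((integrable_sub_div_one_add_sq_mul hσ hx hxa).conj).const_mul c)
      ((integrable_sub_div_one_add_sq_mul hσ hy hyc).const_mul _)]
  congr 1 with t
  have hpointwise := conj_mul_sub_conj_mul_eq t (t / (1 + t ^ 2)) (x t) (y t) a c
  push_cast at hpointwise
  exact hpointwise

end Nevanlinna

theorem tilde_A_symmetric_h0_zero_general
    {H : Type*} [NormedAddCommGroup H] [InnerProductSpace ℂ H] [CompleteSpace H]
    (A : H →ₗ.[ℂ] H)
    (Γ₀ Γ₁ : A.adjoint.domain →ₗ[ℂ] ℂ)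
    (hGreen : ∀ x y : A.adjoint.domain,
      ⟪(A.adjoint x : H), (y : H)⟫_ℂ - ⟪(x : H), (A.adjoint y : H)⟫_ℂ =
        conj (Γ₁ x) * Γ₀ y - conj (Γ₀ x) * Γ₁ y)
    (σ : Measure ℝ) (hσ : Integrable (fun t : ℝ => (1 + t ^ 2)⁻¹) σ) (h : ℝ) :
    ∀ (x₀ y₀ : H) (hx₀ : x₀ ∈ A.adjoint.domain) (hy₀ : y₀ ∈ A.adjoint.domain)
      (x₁ y₁ : Lp ℂ 2 σ),
      MemLp (fun t : ℝ => (t : ℂ) * x₁ t - Γ₀ ⟨x₀, hx₀⟩) 2 σ →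
      MemLp (fun t : ℝ => (t : ℂ) * y₁ t - Γ₀ ⟨y₀, hy₀⟩) 2 σ →
      Γ₁ ⟨x₀, hx₀⟩ + (h : ℂ) * Γ₀ ⟨x₀, hx₀⟩ +
        ∫ t : ℝ, (x₁ t - ((t : ℂ) / (1 + (t : ℂ) ^ 2)) * Γ₀ ⟨x₀, hx₀⟩) ∂σ = 0 →
      Γ₁ ⟨y₀, hy₀⟩ + (h : ℂ) * Γ₀ ⟨y₀, hy₀⟩ +
        ∫ t : ℝ, (y₁ t - ((t : ℂ) / (1 + (t : ℂ) ^ 2)) * Γ₀ ⟨y₀, hy₀⟩) ∂σ = 0 →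
      ⟪(A.adjoint ⟨x₀, hx₀⟩ : H), y₀⟫_ℂ +
          ∫ t : ℝ, conj ((t : ℂ) * x₁ t - Γ₀ ⟨x₀, hx₀⟩) * y₁ t ∂σ =
        ⟪x₀, (A.adjoint ⟨y₀, hy₀⟩ : H)⟫_ℂ +
          ∫ t : ℝ, conj (x₁ t) * ((t : ℂ) * y₁ t - Γ₀ ⟨y₀, hy₀⟩) ∂σ := by
  intro x₀ y₀ hx₀ hy₀ x₁ y₁ hx₁ hy₁ hxbc hybc
  have hmult := integral_conj_mul_sub_integral_conj_mul hσ (Lp.memLp x₁) (Lp.memLp y₁) hx₁ hy₁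
  rw [eq_neg_of_add_eq_zero_right hxbc, eq_neg_of_add_eq_zero_right hybc] at hmult
  simp only [_root_.map_neg, _root_.map_add, _root_.map_mul, Complex.conj_ofReal] at hmult
  linear_combination hGreen ⟨x₀, hx₀⟩ ⟨y₀, hy₀⟩ + hmult

/-- (case `h₀ = 0`) the operator `Ã(x₀, x₁) = (A*x₀, t·x₁(t) − Γ₀x₀)` on
`H ⊕ L²(ℝ, dσ)`, with domain given by `x₀ ∈ D(A*)`, `t·x₁(t) − Γ₀x₀ ∈ L²(ℝ, dσ)` and
`Γ₁x₀ + h·Γ₀x₀ + ∫ (x₁(t) − (t/(1+t²))Γ₀x₀) dσ(t) = 0`, is symmetric: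
`⟨Ãx̃, ỹ⟩ = ⟨x̃, Ãỹ⟩` for all `x̃, ỹ` in its domain. -/
theorem tilde_A_symmetric_h0_zero
    {H : Type*} [NormedAddCommGroup H] [InnerProductSpace ℂ H] [CompleteSpace H]
    [TopologicalSpace.SeparableSpace H]
    (A : H →ₗ.[ℂ] H) (hdense : Dense (A.domain : Set H)) (hclosed : A.IsClosed)
    (hsym : A ≤ A.adjoint)
    (Γ₀ Γ₁ : A.adjoint.domain →ₗ[ℂ] ℂ)
    (hGreen : ∀ x y : A.adjoint.domain,
      ⟪(A.adjoint x : H), (y : H)⟫_ℂ - ⟪(x : H), (A.adjoint y : H)⟫_ℂ =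
        conj (Γ₁ x) * Γ₀ y - conj (Γ₀ x) * Γ₁ y)
    (hsurj : Function.Surjective (fun x : A.adjoint.domain => (Γ₀ x, Γ₁ x)))
    (σ : Measure ℝ) (hσ : Integrable (fun t : ℝ => (1 + t ^ 2)⁻¹) σ) (h : ℝ) :
    ∀ (x₀ y₀ : H) (hx₀ : x₀ ∈ A.adjoint.domain) (hy₀ : y₀ ∈ A.adjoint.domain)
      (x₁ y₁ : Lp ℂ 2 σ),
      MemLp (fun t : ℝ => (t : ℂ) * x₁ t - Γ₀ ⟨x₀, hx₀⟩) 2 σ →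
      MemLp (fun t : ℝ => (t : ℂ) * y₁ t - Γ₀ ⟨y₀, hy₀⟩) 2 σ →
      Γ₁ ⟨x₀, hx₀⟩ + (h : ℂ) * Γ₀ ⟨x₀, hx₀⟩ +
        ∫ t : ℝ, (x₁ t - ((t : ℂ) / (1 + (t : ℂ) ^ 2)) * Γ₀ ⟨x₀, hx₀⟩) ∂σ = 0 →
      Γ₁ ⟨y₀, hy₀⟩ + (h : ℂ) * Γ₀ ⟨y₀, hy₀⟩ +
        ∫ t : ℝ, (y₁ t - ((t : ℂ) / (1 + (t : ℂ) ^ 2)) * Γ₀ ⟨y₀, hy₀⟩) ∂σ = 0 →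
      ⟪(A.adjoint ⟨x₀, hx₀⟩ : H), y₀⟫_ℂ +
          ∫ t : ℝ, conj ((t : ℂ) * x₁ t - Γ₀ ⟨x₀, hx₀⟩) * y₁ t ∂σ =
        ⟪x₀, (A.adjoint ⟨y₀, hy₀⟩ : H)⟫_ℂ +
          ∫ t : ℝ, conj (x₁ t) * ((t : ℂ) * y₁ t - Γ₀ ⟨y₀, hy₀⟩) ∂σ :=
  tilde_A_symmetric_h0_zero_general A Γ₀ Γ₁ hGreen σ hσ h
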